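/- Let f̂ be any hypothesis, f the true causal function of the target task, squared loss ℓ(x,a,y) = (y − f̂(x,a))², and suppose outcomes are deterministic: Y_a = f(x,a). Let u = p_F(a=1). Assume the cross term vanishes (conditional unconfoundedness). Then ε_F(f̂) + u · ε_CF^{a=0}(f̂) ≤ ε_PEHE(f̂), where ε_F(f̂) = u·ε_F^{a=1}(f̂) + (1−u)·ε_F^{a=0}(f̂), ε_F^{a=j}(f̂) = ∫ (f(x,j) − f̂(x,j))² p_F(x | a = j) dx, and ε_CF^{a=0}(f̂) = ∫ (f(x,0) − f̂(x,0))² p_CF(x | a = 0) dx with p_CF(x | a = 0) = p_F(x | a = 1). -/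
import Mathlib


open MeasureTheory

/-- Theorem 4.1, lower bound on PEHE. With `u = p_F(a = 1)`,
group-conditional densities `pc1 = p_F(·|a=1)`, `pc0 = p_F(·|a=0)`, marginal
`pX x = u * pc1 x + (1-u) * pc0 x`, deterministic outcomes `Y_a = f(x,a)`, squared loss,
counterfactual conditional density `p_CF(·|a=0) = p_F(·|a=1) = pc1`, and vanishing cross term,
`ε_F(f̂) + u · ε_CF^{a=0}(f̂) ≤ ε_PEHE(f̂)`. -/
theorem pehe_lower_bound
    {𝒳 : Type*} [MeasurableSpace 𝒳] (μ : Measure 𝒳)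
    (pc1 pc0 : 𝒳 → ℝ) (fhat f : 𝒳 → Bool → ℝ) (u : ℝ)
    (hu0 : 0 ≤ u) (hu1 : u ≤ 1)
    (hpc1 : ∀ x, 0 ≤ pc1 x) (hpc0 : ∀ x, 0 ≤ pc0 x)
    (hint11 : Integrable (fun x => (f x true - fhat x true) ^ 2 * pc1 x) μ)
    (hint10 : Integrable (fun x => (f x true - fhat x true) ^ 2 * pc0 x) μ)
    (hint01 : Integrable (fun x => (f x false - fhat x false) ^ 2 * pc1 x) μ)
    (hint00 : Integrable (fun x => (f x false - fhat x false) ^ 2 * pc0 x) μ)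
    (hcross : ∫ x, (fhat x true - f x true) * (f x false - fhat x false)
        * (u * pc1 x + (1 - u) * pc0 x) ∂μ = 0)
    (hcross_int : Integrable (fun x => (fhat x true - f x true) * (f x false - fhat x false)
        * (u * pc1 x + (1 - u) * pc0 x)) μ) :
    (u * ∫ x, (f x true - fhat x true) ^ 2 * pc1 x ∂μ
        + (1 - u) * ∫ x, (f x false - fhat x false) ^ 2 * pc0 x ∂μ)
      + u * ∫ x, (f x false - fhat x false) ^ 2 * pc1 x ∂μ
    ≤ ∫ x, ((fhat x true - fhat x false) - (f x true - f x false)) ^ 2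
        * (u * pc1 x + (1 - u) * pc0 x) ∂μ := by
  have key : (fun x => ((fhat x true - fhat x false) - (f x true - f x false)) ^ 2
      * (u * pc1 x + (1 - u) * pc0 x))
      = fun x => (u * ((f x true - fhat x true) ^ 2 * pc1 x)
          + (1 - u) * ((f x true - fhat x true) ^ 2 * pc0 x))
        + (u * ((f x false - fhat x false) ^ 2 * pc1 x)
          + (1 - u) * ((f x false - fhat x false) ^ 2 * pc0 x))
        + 2 * ((fhat x true - f x true) * (f x false - fhat x false)
            * (u * pc1 x + (1 - u) * pc0 x)) := by
    funext x; ring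
  have i1 : Integrable (fun x => u * ((f x true - fhat x true) ^ 2 * pc1 x)
      + (1 - u) * ((f x true - fhat x true) ^ 2 * pc0 x)) μ :=
    (hint11.const_mul u).add (hint10.const_mul (1 - u))
  have i0 : Integrable (fun x => u * ((f x false - fhat x false) ^ 2 * pc1 x)
      + (1 - u) * ((f x false - fhat x false) ^ 2 * pc0 x)) μ :=
    (hint01.const_mul u).add (hint00.const_mul (1 - u))
  have i10 : Integrable (fun x => (u * ((f x true - fhat x true) ^ 2 * pc1 x)
      + (1 - u) * ((f x true - fhat x true) ^ 2 * pc0 x))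
      + (u * ((f x false - fhat x false) ^ 2 * pc1 x)
      + (1 - u) * ((f x false - fhat x false) ^ 2 * pc0 x))) μ := i1.add i0
  have hRHS : ∫ x, ((fhat x true - fhat x false) - (f x true - f x false)) ^ 2
      * (u * pc1 x + (1 - u) * pc0 x) ∂μ
      = u * (∫ x, (f x true - fhat x true) ^ 2 * pc1 x ∂μ)
        + (1 - u) * (∫ x, (f x true - fhat x true) ^ 2 * pc0 x ∂μ)
        + (u * (∫ x, (f x false - fhat x false) ^ 2 * pc1 x ∂μ)
          + (1 - u) * (∫ x, (f x false - fhat x false) ^ 2 * pc0 x ∂μ)) := by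
    rw [key, integral_add i10 (hcross_int.const_mul 2), integral_add i1 i0]
    rw [integral_add (hint11.const_mul u) (hint10.const_mul (1 - u)),
        integral_add (hint01.const_mul u) (hint00.const_mul (1 - u)),
        integral_const_mul, integral_const_mul, integral_const_mul, integral_const_mul,
        integral_const_mul, hcross]
    ring
  rw [hRHS]
  have h10 : 0 ≤ ∫ x, (f x true - fhat x true) ^ 2 * pc0 x ∂μ :=
    integral_nonneg fun x => mul_nonneg (sq_nonneg _) (hpc0 x)
  nlinarith [mul_nonneg (sub_nonneg.2 hu1) h10]
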